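/- Let φ be a smooth nonnegative function on ℂ and a a complex constant. For every compactly supported smooth function ψ : ℂ → ℂ, one has ‖(∂̄^{*}_φ + a)ψ‖²_φ ≥ ∫_ℂ |ψ|² (∂∂̄φ) e^{-φ} dσ, i.e., the weighted L² norm of (∂̄^{*}_φ + a)ψ squared is at least ‖ψ √(∂∂̄φ)‖²_φ. -/

import Mathlib

/-!
Write `T = ∂̄^*_φ + a` and `S = ∂̄ + ā` for its formal adjoint with respect to `e^{-φ}`.
Expanding with the Leibniz rule and `∂∂̄ = ∂̄∂`, one gets the pointwise identity
`|Tψ|² e^{-φ} = |Sψ|² e^{-φ} + |ψ|² ∂∂̄φ e^{-φ} - Re (∂̄(ψ̄ · Tψ · e^{-φ}) + ∂(ψ̄ · Sψ · e^{-φ}))`.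
The last two terms are derivatives of compactly supported functions, so they integrate to
zero, whence `‖Tψ‖²_φ = ‖Sψ‖²_φ + ∫ |ψ|² ∂∂̄φ e^{-φ}`; drop `‖Sψ‖²_φ ≥ 0`.
-/

open MeasureTheory Complex ComplexConjugate

/-- The Wirtinger derivative `∂ = (1/2)(∂/∂x - i ∂/∂y)`. -/
noncomputable def wD (f : ℂ → ℂ) (z : ℂ) : ℂ :=
  (1 / 2 : ℂ) * (fderiv ℝ f z 1 - Complex.I * fderiv ℝ f z Complex.I)

/-- The Cauchy–Riemann operator `∂̄ = (1/2)(∂/∂x + i ∂/∂y)`. -/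
noncomputable def wDbar (f : ℂ → ℂ) (z : ℂ) : ℂ :=
  (1 / 2 : ℂ) * (fderiv ℝ f z 1 + Complex.I * fderiv ℝ f z Complex.I)

/-- `f` is locally square integrable on `ℂ` (w.r.t. Lebesgue measure). -/
def MemL2loc (f : ℂ → ℂ) : Prop :=
  AEStronglyMeasurable f volume ∧
    ∀ K : Set ℂ, IsCompact K → IntegrableOn (fun z => ‖f z‖ ^ 2) K volume

/-- `f ∈ L²(ℂ, e^{-φ})`: locally square integrable with finite weighted `L²` norm. -/
def MemL2w (φ : ℂ → ℝ) (f : ℂ → ℂ) : Prop :=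
  MemL2loc f ∧ Integrable (fun z => ‖f z‖ ^ 2 * Real.exp (-φ z)) volume

/-- `∂̄^k u = f` holds in the weak (distributional) sense on `ℂ`:
`∫ u ∂̄^k ψ = (-1)^k ∫ f ψ` for all compactly supported smooth test functions `ψ`. -/
def WeakDbarPow (k : ℕ) (u f : ℂ → ℂ) : Prop :=
  ∀ ψ : ℂ → ℂ, ContDiff ℝ (⊤ : ℕ∞) ψ → HasCompactSupport ψ →
    ∫ z, u z * (wDbar^[k] ψ) z = (-1 : ℂ) ^ k * ∫ z, f z * ψ z

/-- The formal adjoint `∂̄^{k*}_φ ψ = (-1)^k e^{φ} ∂^k (ψ e^{-φ})` of `∂̄^k` with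
respect to the weight `e^{-φ}`. -/
noncomputable def adjDbar (φ : ℂ → ℝ) (k : ℕ) (ψ : ℂ → ℂ) : ℂ → ℂ := fun z =>
  (-1 : ℂ) ^ k * (Real.exp (φ z) : ℂ) *
    wD^[k] (fun w => ψ w * (Real.exp (-φ w) : ℂ)) z

/-- The weighted inner product `⟨f, g⟩_φ = ∫ conj(f) g e^{-φ} dσ`. -/
noncomputable def wip (φ : ℂ → ℝ) (f g : ℂ → ℂ) : ℂ :=
  ∫ z, conj (f z) * g z * (Real.exp (-φ z) : ℂ)

theorem integral_fderiv_apply_eq_zero {E 𝕜 : Type*} [NormedAddCommGroup E] [NormedSpace ℝ E]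
    [FiniteDimensional ℝ E] [MeasurableSpace E] [BorelSpace E] {μ : Measure E}
    [μ.IsAddHaarMeasure] [RCLike 𝕜] {f : E → 𝕜} (hf : ContDiff ℝ 1 f)
    (hs : HasCompactSupport f) (v : E) : ∫ x, fderiv ℝ f x v ∂μ = 0 := by
  have h := integral_mul_fderiv_eq_neg_fderiv_mul_of_integrable (μ := μ) (v := v)
    (f := fun _ => (1 : 𝕜)) (g := f) (by simp)
    (by simpa using ((hf.continuous_fderiv one_ne_zero).clm_apply continuous_const
      ).integrable_of_hasCompactSupport (hs.fderiv_apply ℝ v))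
    (by simpa using hf.continuous.integrable_of_hasCompactSupport hs)
    (fun x _ => differentiableAt_const 1) (fun x _ => hf.differentiable one_ne_zero x)
  simpa using h

theorem DifferentiableAt.ofReal_comp {E : Type*} [NormedAddCommGroup E] [NormedSpace ℝ E]
    {φ : E → ℝ} {x : E} (hφ : DifferentiableAt ℝ φ x) :
    DifferentiableAt ℝ (fun w => (φ w : ℂ)) x :=
  ofRealCLM.differentiableAt.comp x hφ

section Wirtinger

variable {f g : ℂ → ℂ} {z : ℂ}

theorem contDiff_wD {n m : WithTop ℕ∞} (hf : ContDiff ℝ n f) (hmn : m + 1 ≤ n) :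
    ContDiff ℝ m (wD f) :=
  have hf' := hf.fderiv_right hmn
  contDiff_const.mul ((hf'.clm_apply contDiff_const).sub
    (contDiff_const.mul (hf'.clm_apply contDiff_const)))

theorem contDiff_wDbar {n m : WithTop ℕ∞} (hf : ContDiff ℝ n f) (hmn : m + 1 ≤ n) :
    ContDiff ℝ m (wDbar f) :=
  have hf' := hf.fderiv_right hmn
  contDiff_const.mul ((hf'.clm_apply contDiff_const).add
    (contDiff_const.mul (hf'.clm_apply contDiff_const)))

theorem hasCompactSupport_wD (hf : HasCompactSupport f) : HasCompactSupport (wD f) :=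
  (hf.fderiv ℝ).comp_left (g := fun L : ℂ →L[ℝ] ℂ => (1 / 2 : ℂ) * (L 1 - I * L I)) (by simp)

theorem hasCompactSupport_wDbar (hf : HasCompactSupport f) : HasCompactSupport (wDbar f) :=
  (hf.fderiv ℝ).comp_left (g := fun L : ℂ →L[ℝ] ℂ => (1 / 2 : ℂ) * (L 1 + I * L I)) (by simp)

theorem integrable_wD (hf : ContDiff ℝ 1 f) (hs : HasCompactSupport f) : Integrable (wD f) :=
  (contDiff_wD hf (m := 0) (by simp)).continuous.integrable_of_hasCompactSupport
    (hasCompactSupport_wD hs)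

theorem integrable_wDbar (hf : ContDiff ℝ 1 f) (hs : HasCompactSupport f) :
    Integrable (wDbar f) :=
  (contDiff_wDbar hf (m := 0) (by simp)).continuous.integrable_of_hasCompactSupport
    (hasCompactSupport_wDbar hs)

theorem integral_wD_eq_zero (hf : ContDiff ℝ 1 f) (hs : HasCompactSupport f) :
    ∫ z, wD f z = 0 := by
  have hint (v : ℂ) : Integrable (fun z => fderiv ℝ f z v) :=
    ((hf.continuous_fderiv one_ne_zero).clm_apply continuous_const).integrable_of_hasCompactSupport
      (hs.fderiv_apply ℝ v)
  simp only [wD]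
  rw [integral_const_mul, integral_sub (hint 1) ((hint I).const_mul I), integral_const_mul,
    integral_fderiv_apply_eq_zero hf hs, integral_fderiv_apply_eq_zero hf hs]
  simp

theorem integral_wDbar_eq_zero (hf : ContDiff ℝ 1 f) (hs : HasCompactSupport f) :
    ∫ z, wDbar f z = 0 := by
  have hint (v : ℂ) : Integrable (fun z => fderiv ℝ f z v) :=
    ((hf.continuous_fderiv one_ne_zero).clm_apply continuous_const).integrable_of_hasCompactSupport
      (hs.fderiv_apply ℝ v)
  simp only [wDbar]
  rw [integral_const_mul, integral_add (hint 1) ((hint I).const_mul I), integral_const_mul,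
    integral_fderiv_apply_eq_zero hf hs, integral_fderiv_apply_eq_zero hf hs]
  simp

theorem integral_re_wDbar_add_wD (hf : ContDiff ℝ 1 f) (hfs : HasCompactSupport f)
    (hg : ContDiff ℝ 1 g) (hgs : HasCompactSupport g) : ∫ z, (wDbar f z + wD g z).re = 0 := calc
  _ = (∫ z, (wDbar f z + wD g z)).re :=
    integral_re ((integrable_wDbar hf hfs).fun_add (integrable_wD hg hgs))
  _ = 0 := by
    rw [integral_add (integrable_wDbar hf hfs) (integrable_wD hg hgs),
      integral_wDbar_eq_zero hf hfs, integral_wD_eq_zero hg hgs, add_zero, zero_re]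

@[simp]
theorem wD_const (c : ℂ) : wD (fun _ => c) z = 0 := by simp [wD]

@[simp]
theorem wDbar_const (c : ℂ) : wDbar (fun _ => c) z = 0 := by simp [wDbar]

theorem wD_add (hf : DifferentiableAt ℝ f z) (hg : DifferentiableAt ℝ g z) :
    wD (fun w => f w + g w) z = wD f z + wD g z := by
  simp only [wD, fderiv_fun_add hf hg, FunLike.coe_add, Pi.add_apply]; ring

theorem wDbar_add (hf : DifferentiableAt ℝ f z) (hg : DifferentiableAt ℝ g z) :
    wDbar (fun w => f w + g w) z = wDbar f z + wDbar g z := by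
  simp only [wDbar, fderiv_fun_add hf hg, FunLike.coe_add, Pi.add_apply]; ring

theorem wD_neg : wD (fun w => -f w) z = -wD f z := by
  simp only [wD, fderiv_fun_neg, FunLike.coe_neg, Pi.neg_apply]; ring

theorem wDbar_neg : wDbar (fun w => -f w) z = -wDbar f z := by
  simp only [wDbar, fderiv_fun_neg, FunLike.coe_neg, Pi.neg_apply]; ring

theorem fderiv_mul_apply (hf : DifferentiableAt ℝ f z) (hg : DifferentiableAt ℝ g z) (v : ℂ) :
    fderiv ℝ (fun w => f w * g w) z v = fderiv ℝ f z v * g z + f z * fderiv ℝ g z v := by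
  simp [fderiv_fun_mul hf hg]
  ring

theorem wD_mul (hf : DifferentiableAt ℝ f z) (hg : DifferentiableAt ℝ g z) :
    wD (fun w => f w * g w) z = wD f z * g z + f z * wD g z := by
  simp only [wD, fderiv_mul_apply hf hg]; ring

theorem wDbar_mul (hf : DifferentiableAt ℝ f z) (hg : DifferentiableAt ℝ g z) :
    wDbar (fun w => f w * g w) z = wDbar f z * g z + f z * wDbar g z := by
  simp only [wDbar, fderiv_mul_apply hf hg]; ring

theorem wD_cexp (hf : DifferentiableAt ℝ f z) :
    wD (fun w => exp (f w)) z = exp (f z) * wD f z := by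
  simp only [wD, hf.hasFDerivAt.cexp.fderiv, FunLike.coe_smul, Pi.smul_apply, smul_eq_mul]; ring

theorem wDbar_cexp (hf : DifferentiableAt ℝ f z) :
    wDbar (fun w => exp (f w)) z = exp (f z) * wDbar f z := by
  simp only [wDbar, hf.hasFDerivAt.cexp.fderiv, FunLike.coe_smul, Pi.smul_apply, smul_eq_mul]
  ring

theorem wD_conj : wD (fun w => conj (f w)) z = conj (wDbar f z) := by
  have h : fderiv ℝ (fun w => conj (f w)) z =
      (starL' ℝ).toContinuousLinearMap.comp (fderiv ℝ f z) := fderiv_star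
  simp [wD, wDbar, h, map_ofNat]
  ring

theorem wDbar_conj : wDbar (fun w => conj (f w)) z = conj (wD f z) := by
  simpa using congrArg conj (wD_conj (f := fun w => conj (f w)) (z := z)).symm

theorem fderiv_wD_apply (hf : DifferentiableAt ℝ (fderiv ℝ f) z) (u : ℂ) :
    fderiv ℝ (wD f) z u =
      (1 / 2 : ℂ) * (fderiv ℝ (fderiv ℝ f) z u 1 - I * fderiv ℝ (fderiv ℝ f) z u I) := by
  have hv (v : ℂ) :
      HasFDerivAt (fun w => fderiv ℝ f w v) ((fderiv ℝ (fderiv ℝ f) z).flip v) z := by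
    simpa using hf.hasFDerivAt.clm_apply (hasFDerivAt_const v z)
  have h : HasFDerivAt (wD f) _ z := ((hv 1).fun_sub ((hv I).const_mul I)).const_mul (1 / 2 : ℂ)
  simp [h.fderiv]

theorem fderiv_wDbar_apply (hf : DifferentiableAt ℝ (fderiv ℝ f) z) (u : ℂ) :
    fderiv ℝ (wDbar f) z u =
      (1 / 2 : ℂ) * (fderiv ℝ (fderiv ℝ f) z u 1 + I * fderiv ℝ (fderiv ℝ f) z u I) := by
  have hv (v : ℂ) :
      HasFDerivAt (fun w => fderiv ℝ f w v) ((fderiv ℝ (fderiv ℝ f) z).flip v) z := by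
    simpa using hf.hasFDerivAt.clm_apply (hasFDerivAt_const v z)
  have h : HasFDerivAt (wDbar f) _ z :=
    ((hv 1).fun_add ((hv I).const_mul I)).const_mul (1 / 2 : ℂ)
  simp [h.fderiv, mul_add]

theorem wDbar_wD (hf : ContDiffAt ℝ 2 f z) : wDbar (wD f) z = wD (wDbar f) z := by
  have hd : DifferentiableAt ℝ (fderiv ℝ f) z :=
    (hf.fderiv_right (m := 1) (by norm_num)).differentiableAt one_ne_zero
  have hsymm := hf.isSymmSndFDerivAt (by simp [minSmoothness_of_isRCLikeNormedField]) I 1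
  simp only [wD, wDbar, fderiv_wD_apply hd, fderiv_wDbar_apply hd, hsymm]
  ring

end Wirtinger

section Weight

variable {φ : ℂ → ℝ} {ψ : ℂ → ℂ}

theorem conj_wD_ofReal (φ : ℂ → ℝ) (z : ℂ) :
    conj (wD (fun w => (φ w : ℂ)) z) = wDbar (fun w => (φ w : ℂ)) z := by
  simpa using congrArg conj (wD_conj (f := fun w => (φ w : ℂ)) (z := z))

theorem ofReal_exp_neg_eq_cexp (φ : ℂ → ℝ) :
    (fun w => (Real.exp (-φ w) : ℂ)) = fun w => exp (-(φ w : ℂ)) := by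
  ext w; push_cast; rfl

theorem wD_exp_neg {z : ℂ} (hφ : DifferentiableAt ℝ φ z) :
    wD (fun w => (Real.exp (-φ w) : ℂ)) z =
      -wD (fun w => (φ w : ℂ)) z * Real.exp (-φ z) := by
  rw [ofReal_exp_neg_eq_cexp, wD_cexp hφ.ofReal_comp.fun_neg, wD_neg]
  push_cast; ring

theorem wDbar_exp_neg {z : ℂ} (hφ : DifferentiableAt ℝ φ z) :
    wDbar (fun w => (Real.exp (-φ w) : ℂ)) z =
      -wDbar (fun w => (φ w : ℂ)) z * Real.exp (-φ z) := by
  rw [ofReal_exp_neg_eq_cexp, wDbar_cexp hφ.ofReal_comp.fun_neg, wDbar_neg]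
  push_cast; ring

theorem adjDbar_one_eq (hφ : Differentiable ℝ φ) (hψ : Differentiable ℝ ψ) :
    adjDbar φ 1 ψ = fun z => -wD ψ z + wD (fun w => (φ w : ℂ)) z * ψ z := by
  ext z
  have he : DifferentiableAt ℝ (fun w => (Real.exp (-φ w) : ℂ)) z := by
    rw [ofReal_exp_neg_eq_cexp]; exact (hφ z).ofReal_comp.fun_neg.cexp
  simp only [adjDbar, Function.iterate_one, wD_mul (hψ z) he, wD_exp_neg (hφ z)]
  have h1 : (Real.exp (φ z) : ℂ) * Real.exp (-φ z) = 1 := by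
    rw [← ofReal_mul, ← Real.exp_add]; simp
  linear_combination (ψ z * wD (fun w => (φ w : ℂ)) z - wD ψ z) * h1

theorem contDiff_adjDbar_one {n m : WithTop ℕ∞} (hφ : ContDiff ℝ n φ) (hψ : ContDiff ℝ n ψ)
    (hmn : m + 1 ≤ n) : ContDiff ℝ m (adjDbar φ 1 ψ) := by
  have he : ContDiff ℝ n (fun w => (Real.exp (-φ w) : ℂ)) := by
    rw [ofReal_exp_neg_eq_cexp]; exact (ofRealCLM.contDiff.comp hφ).neg.cexp
  exact (contDiff_const.mul (ofRealCLM.contDiff.comp (hφ.of_le (le_self_add.trans hmn)).exp)).mul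
    (contDiff_wD (hψ.mul he) hmn)

theorem norm_sq_adjDbar_add_mul_exp (hφ : ContDiff ℝ 2 φ) (hψ : ContDiff ℝ 2 ψ) (a z : ℂ) :
    ‖adjDbar φ 1 ψ z + a * ψ z‖ ^ 2 * Real.exp (-φ z) =
      ‖wDbar ψ z + conj a * ψ z‖ ^ 2 * Real.exp (-φ z) +
        ‖ψ z‖ ^ 2 * (wD (wDbar (fun w => (φ w : ℂ))) z).re * Real.exp (-φ z) -
        (wDbar (fun w => conj (ψ w) * (adjDbar φ 1 ψ w + a * ψ w) * Real.exp (-φ w)) z +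
          wD (fun w => conj (ψ w) * (wDbar ψ w + conj a * ψ w) * Real.exp (-φ w)) z).re := by
  have hΦ : ContDiff ℝ 2 (fun w => (φ w : ℂ)) := ofRealCLM.contDiff.comp hφ
  have hφ' : Differentiable ℝ φ := hφ.differentiable two_ne_zero
  have hψ' : Differentiable ℝ ψ := hψ.differentiable two_ne_zero
  have hDψ : Differentiable ℝ (wD ψ) := (contDiff_wD hψ le_rfl).differentiable one_ne_zero
  have hDbarψ : Differentiable ℝ (wDbar ψ) :=
    (contDiff_wDbar hψ le_rfl).differentiable one_ne_zero
  have hDΦ : Differentiable ℝ (wD (fun w => (φ w : ℂ))) :=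
    (contDiff_wD hΦ le_rfl).differentiable one_ne_zero
  rw [adjDbar_one_eq hφ' hψ']
  have key :
      ((‖-wD ψ z + wD (fun w => (φ w : ℂ)) z * ψ z + a * ψ z‖ ^ 2 * Real.exp (-φ z) : ℝ) : ℂ) =
      ((‖wDbar ψ z + conj a * ψ z‖ ^ 2 * Real.exp (-φ z) : ℝ) : ℂ) +
        ((‖ψ z‖ ^ 2 * Real.exp (-φ z) : ℝ) : ℂ) * wD (wDbar (fun w => (φ w : ℂ))) z -
        (wDbar (fun w => conj (ψ w) * (-wD ψ w + wD (fun w => (φ w : ℂ)) w * ψ w + a * ψ w) *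
            Real.exp (-φ w)) z +
          wD (fun w => conj (ψ w) * (wDbar ψ w + conj a * ψ w) * Real.exp (-φ w)) z) := by
    simp only [ofReal_mul, ofReal_pow, ← conj_mul']
    simp (disch := fun_prop) only [wD_mul, wDbar_mul, wD_add, wDbar_add, wDbar_neg, wD_const,
      wDbar_const, wD_conj, wDbar_conj, wD_exp_neg, wDbar_exp_neg, wDbar_wD hψ.contDiffAt,
      wDbar_wD hΦ.contDiffAt]
    simp only [map_add, map_mul, map_neg, conj_conj, conj_wD_ofReal]
    ring
  have h := congrArg re key
  simp only [ofReal_re, sub_re, add_re, re_ofReal_mul] at h ⊢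
  linear_combination h

theorem integral_norm_sq_adjDbar_add_mul_exp (hφ : ContDiff ℝ 2 φ) (hψ : ContDiff ℝ 2 ψ)
    (hψc : HasCompactSupport ψ) (a : ℂ) :
    ∫ z, ‖adjDbar φ 1 ψ z + a * ψ z‖ ^ 2 * Real.exp (-φ z) =
      (∫ z, ‖wDbar ψ z + conj a * ψ z‖ ^ 2 * Real.exp (-φ z)) +
        ∫ z, ‖ψ z‖ ^ 2 * (wD (wDbar (fun w => (φ w : ℂ))) z).re * Real.exp (-φ z) := by
  have hψ1 : ContDiff ℝ 1 ψ := hψ.of_le one_le_two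
  have hconj : ContDiff ℝ 1 (fun w => conj (ψ w)) :=
    conjCLE.toContinuousLinearMap.contDiff.comp hψ1
  have he : ContDiff ℝ 1 (fun w => (Real.exp (-φ w) : ℂ)) := by
    rw [ofReal_exp_neg_eq_cexp]; exact (ofRealCLM.contDiff.comp (hφ.of_le one_le_two)).neg.cexp
  have hSc : HasCompactSupport (fun z => wDbar ψ z + conj a * ψ z) :=
    (hasCompactSupport_wDbar hψc).add hψc.mul_left
  have hS : Integrable (fun z => ‖wDbar ψ z + conj a * ψ z‖ ^ 2 * Real.exp (-φ z)) :=
    ((((contDiff_wDbar hψ (m := 0) (by norm_num)).continuous.add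
      (continuous_const.mul hψ.continuous)).norm.pow 2).mul hφ.continuous.neg.rexp
      ).integrable_of_hasCompactSupport (hSc.mono fun z hz hSz => hz (by simp [hSz]))
  have hP : Integrable
      (fun z => ‖ψ z‖ ^ 2 * (wD (wDbar (fun w => (φ w : ℂ))) z).re * Real.exp (-φ z)) :=
    (((hψ.continuous.norm.pow 2).mul (continuous_re.comp (contDiff_wD (m := 0)
      (contDiff_wDbar (ofRealCLM.contDiff.comp hφ) (m := 1) (by norm_num))
        (by norm_num)).continuous)).mul hφ.continuous.neg.rexp).integrable_of_hasCompactSupport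
      (hψc.mono fun z hz hψz => hz (by simp [hψz]))
  simp_rw [norm_sq_adjDbar_add_mul_exp hφ hψ a]
  set A := fun w => conj (ψ w) * (adjDbar φ 1 ψ w + a * ψ w) * Real.exp (-φ w)
  set B := fun w => conj (ψ w) * (wDbar ψ w + conj a * ψ w) * Real.exp (-φ w)
  have hA : ContDiff ℝ 1 A := (hconj.mul ((contDiff_adjDbar_one hφ hψ (by norm_num)).add
      (contDiff_const.mul hψ1))).mul he
  have hB : ContDiff ℝ 1 B := (hconj.mul ((contDiff_wDbar hψ (by norm_num)).add
      (contDiff_const.mul hψ1))).mul he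
  have hAc : HasCompactSupport A := hψc.mono fun z hz hψz => hz (by simp [A, hψz])
  have hBc : HasCompactSupport B := hψc.mono fun z hz hψz => hz (by simp [B, hψz])
  have hdiv : Integrable (fun z => (wDbar A z + wD B z).re) :=
    ((integrable_wDbar hA hAc).fun_add (integrable_wD hB hBc)).re
  rw [integral_sub (hS.fun_add hP) hdiv, integral_add hS hP,
    integral_re_wDbar_add_wD hA hAc hB hBc, sub_zero]

end Weight

theorem a_priori_estimate_general_general (φ : ℂ → ℝ) (hφs : ContDiff ℝ (⊤ : ℕ∞) φ)
    (a : ℂ) (ψ : ℂ → ℂ)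
    (hψ1 : ContDiff ℝ (⊤ : ℕ∞) ψ) (hψ2 : HasCompactSupport ψ) :
    ∫ z, ‖ψ z‖ ^ 2 * (wD (wDbar (fun w => (φ w : ℂ))) z).re * Real.exp (-φ z) ≤
      ∫ z, ‖adjDbar φ 1 ψ z + a * ψ z‖ ^ 2 * Real.exp (-φ z) := by
  rw [integral_norm_sq_adjDbar_add_mul_exp (hφs.of_le (WithTop.coe_le_coe.2 le_top))
    (hψ1.of_le (WithTop.coe_le_coe.2 le_top)) hψ2 a]
  exact le_add_of_nonneg_left (integral_nonneg fun z => by positivity)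

/-- The estimate `‖(∂̄^* _φ + a)ψ‖²_φ ≥ ∫ |ψ|² (∂∂̄φ) e^{-φ} dσ` for a smooth
nonnegative weight `φ` and every test function `ψ`.  Since `φ` is real-valued,
`∂∂̄φ` is real-valued, and we take its real part. -/
theorem a_priori_estimate_general (φ : ℂ → ℝ) (hφs : ContDiff ℝ (⊤ : ℕ∞) φ)
    (hφ0 : ∀ z, 0 ≤ φ z) (a : ℂ) (ψ : ℂ → ℂ)
    (hψ1 : ContDiff ℝ (⊤ : ℕ∞) ψ) (hψ2 : HasCompactSupport ψ) :
    ∫ z, ‖ψ z‖ ^ 2 * (wD (wDbar (fun w => (φ w : ℂ))) z).re * Real.exp (-φ z) ≤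
      ∫ z, ‖adjDbar φ 1 ψ z + a * ψ z‖ ^ 2 * Real.exp (-φ z) :=
  a_priori_estimate_general_general φ hφs a ψ hψ1 hψ2
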